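/- arXiv:1705.05915 — 2 statements merged into one kernel-verified Lean document; each statement's English description precedes it below -/
import Mathlib

section
/- For every permutation ((1),...,(n)) of N, every point (x,y,z) of F_σ satisfies the lifted linear polymatroid inequality Σ_{i=1}^n π_(i) x_(i) ≤ z + Σ_{i=1}^n α_(i)(x_(i) − y_(i)) − √σ, where π_(i) = √σ_(i) − √σ_(i−1) and α_(i) = a_(i)/√σ_(i), with σ_(0) = σ and σ_(i) = a_(i) + σ_(i−1). -/
/-!
Add the indices one at a time in the order given by `e`, keeping as invariant that `√σ` plus
the partial sum of `π_(i) x_(i) - α_(i) (x_(i) - y_(i))` is at most `√(σ + ∑ a_(i) y_(i)²)` over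
the indices added so far; at the end the right-hand side is at most `z`. An index with `x = 0`
has `y = 0` and changes nothing. For `x = 1`, with `S`, `T` the sums of `a` and of `a y²` so
far (`T ≤ S`), the increment is bounded by
`√(S + a) - √S - a/√(S + a) · (1 - y) ≤ √(S + a y²) - √S ≤ √(T + a y²) - √T`,
the first step being Cauchy–Schwarz `(S + a y)² ≤ (S + a y²)(S + a)` and the second the
concavity of `√`.
-/

open Real Finset

theorem sqrt_add_sub_sqrt_le_of_le {s t c : ℝ} (ht : 0 ≤ t) (hts : t ≤ s) (hc : 0 ≤ c) :
    √(s + c) - √s ≤ √(t + c) - √t := by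
  have hcross : √(s + c) * √t ≤ √(t + c) * √s := by
    rw [← sqrt_mul (by linarith), ← sqrt_mul (by linarith)]
    exact sqrt_le_sqrt (by nlinarith)
  nlinarith [sq_sqrt (show 0 ≤ s + c by linarith), sq_sqrt (show 0 ≤ t + c by linarith),
    sq_sqrt (show 0 ≤ s by linarith), sq_sqrt ht,
    sqrt_nonneg (s + c), sqrt_nonneg (t + c), sqrt_nonneg s, sqrt_nonneg t]

theorem sqrt_add_sub_div_mul_le_sqrt {s a : ℝ} (y : ℝ) (hs : 0 ≤ s) (ha : 0 ≤ a) :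
    √(s + a) - a / √(s + a) * (1 - y) ≤ √(s + a * y ^ 2) := by
  rcases (add_nonneg hs ha).eq_or_lt with hsa | hsa
  · obtain ⟨rfl, rfl⟩ : s = 0 ∧ a = 0 := ⟨by linarith, by linarith⟩
    simp
  have hroot : 0 < √(s + a) := sqrt_pos.2 hsa
  have hcs : s + a * y ≤ √(s + a * y ^ 2) * √(s + a) := by
    rw [← sqrt_mul (by positivity)]
    refine (le_abs_self _).trans (abs_le_sqrt ?_)
    nlinarith [mul_nonneg (mul_nonneg hs ha) (sq_nonneg (1 - y))]
  calc √(s + a) - a / √(s + a) * (1 - y) = (s + a * y) / √(s + a) := by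
        field_simp
        rw [sq_sqrt hsa.le]
        ring
    _ ≤ √(s + a * y ^ 2) := div_le_of_le_mul₀ hroot.le (sqrt_nonneg _) hcs

theorem sqrt_add_sub_sqrt_sub_div_mul_le {s t a : ℝ} (y : ℝ) (ht : 0 ≤ t) (hts : t ≤ s)
    (ha : 0 ≤ a) :
    √(s + a) - √s - a / √(s + a) * (1 - y) ≤ √(t + a * y ^ 2) - √t := by
  have := sqrt_add_sub_div_mul_le_sqrt y (ht.trans hts) ha
  have := sqrt_add_sub_sqrt_le_of_le ht hts (by positivity : 0 ≤ a * y ^ 2)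
  linarith

theorem sum_mul_sq_le_sum {ι : Type*} (s : Finset ι) {b y : ι → ℝ} (hb : ∀ i, 0 ≤ b i)
    (hy : ∀ i, y i ^ 2 ≤ 1) : ∑ i ∈ s, b i * y i ^ 2 ≤ ∑ i ∈ s, b i :=
  sum_le_sum fun i _ => mul_le_of_le_one_right (hb i) (hy i)

theorem sqrt_add_sum_lifted_polymatroid_le {ι : Type*} [LinearOrder ι] {σ : ℝ} (hσ : 0 ≤ σ)
    {b x y : ι → ℝ} (hb : ∀ i, 0 ≤ b i) (hx : ∀ i, x i = 0 ∨ x i = 1)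
    (hy : ∀ i, 0 ≤ y i ∧ y i ≤ x i) (s : Finset ι) :
    √σ + ∑ k ∈ s, ((√(σ + ∑ j ∈ s.filter (· ≤ k), b j) - √(σ + ∑ j ∈ s.filter (· < k), b j))
        * x k - b k / √(σ + ∑ j ∈ s.filter (· ≤ k), b j) * (x k - y k))
      ≤ √(σ + ∑ k ∈ s, b k * y k ^ 2) := by
  have hy_sq : ∀ i, y i ^ 2 ≤ 1 := fun i => by
    rcases hx i with h | h <;> nlinarith [hy i]
  induction s using Finset.induction_on_max with
  | empty => simp
  | insert m s hlt ih =>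
    have hm : m ∉ s := fun h => lt_irrefl m (hlt m h)
    have hle_m : (insert m s).filter (· ≤ m) = insert m s :=
      filter_true_of_mem fun j hj => by
        rcases mem_insert.1 hj with rfl | hj
        exacts [le_rfl, (hlt j hj).le]
    have hlt_m : (insert m s).filter (· < m) = s := by
      rw [filter_insert, if_neg (lt_irrefl m), filter_true_of_mem hlt]
    have hearlier : ∀ k ∈ s,
        (√(σ + ∑ j ∈ (insert m s).filter (· ≤ k), b j)
            - √(σ + ∑ j ∈ (insert m s).filter (· < k), b j)) * x k
          - b k / √(σ + ∑ j ∈ (insert m s).filter (· ≤ k), b j) * (x k - y k)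
        = (√(σ + ∑ j ∈ s.filter (· ≤ k), b j) - √(σ + ∑ j ∈ s.filter (· < k), b j)) * x k
          - b k / √(σ + ∑ j ∈ s.filter (· ≤ k), b j) * (x k - y k) := fun k hk => by
      rw [filter_insert, if_neg (hlt k hk).not_ge, filter_insert, if_neg (hlt k hk).asymm]
    rw [sum_insert hm, sum_congr rfl hearlier, hle_m, hlt_m, sum_insert hm, sum_insert hm]
    set S := ∑ j ∈ s, b j
    set T := ∑ j ∈ s, b j * y j ^ 2
    have hTS : T ≤ S := sum_mul_sq_le_sum s hb hy_sq
    have hT : 0 ≤ T := sum_nonneg fun i _ => mul_nonneg (hb i) (sq_nonneg _)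
    rcases hx m with hxm | hxm
    · have hym : y m = 0 := le_antisymm (hxm ▸ (hy m).2) (hy m).1
      simpa [hxm, hym] using ih
    · have hstep := sqrt_add_sub_sqrt_sub_div_mul_le (y m) (add_nonneg hσ hT)
        (add_le_add_right hTS σ) (hb m)
      have hS : σ + (b m + S) = σ + S + b m := by ring
      have hT' : σ + (b m * y m ^ 2 + T) = σ + T + b m * y m ^ 2 := by ring
      rw [hxm, mul_one, hS, hT']
      linarith

/-- **Validity of the lifted linear polymatroid inequality for `F_σ`.**
`F_σ = {(x,y,z) ∈ {0,1}^N × ℝ₊^N × ℝ₊ : σ + ∑ a i y i² ≤ z², 0 ≤ y ≤ x}` with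
`σ ≥ 0`, `a i > 0`. For every permutation `e` of `N`, with
`σ_(0) = σ`, `σ_(i) = a_(i) + σ_(i−1)`, `π_(i) = √σ_(i) − √σ_(i−1)` and
`α_(i) = a_(i)/√σ_(i)`, every point of `F_σ` satisfies
`∑ i, π_(i) x_(i) ≤ z + ∑ i, α_(i) (x_(i) − y_(i)) − √σ`. -/
theorem lifted_linear_polymatroid_valid
    (n : ℕ) (σ : ℝ) (a : Fin n → ℝ) (hσ : 0 ≤ σ) (ha : ∀ i, 0 < a i)
    (e : Equiv.Perm (Fin n)) (x y : Fin n → ℝ) (z : ℝ)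
    (hx : ∀ i, x i = 0 ∨ x i = 1) (hy : ∀ i, 0 ≤ y i ∧ y i ≤ x i) (hz : 0 ≤ z)
    (hF : σ + ∑ i, a i * y i ^ 2 ≤ z ^ 2) :
    ∑ k, (Real.sqrt (σ + ∑ j ∈ Finset.univ.filter (fun j => j ≤ k), a (e j))
        - Real.sqrt (σ + ∑ j ∈ Finset.univ.filter (fun j => j < k), a (e j)))
          * x (e k)
      ≤ z + ∑ k, (a (e k)
            / Real.sqrt (σ + ∑ j ∈ Finset.univ.filter (fun j => j ≤ k), a (e j)))
          * (x (e k) - y (e k))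
        - Real.sqrt σ := by
  have key := sqrt_add_sum_lifted_polymatroid_le hσ (b := fun j => a (e j))
    (x := fun j => x (e j)) (y := fun j => y (e j)) (fun i => (ha (e i)).le) (fun i => hx (e i))
    (fun i => hy (e i)) univ
  rw [sum_sub_distrib, Equiv.sum_comp e fun i => a i * y i ^ 2] at key
  have hz' : √(σ + ∑ i, a i * y i ^ 2) ≤ z := (sqrt_le_left hz).2 hF
  linarith
end

section
/- For disjoint S ⊆ N and T ⊆ N∖S and a permutation ((1),...,(|S|)) of S, the following n+1 points belong to F, satisfy the inequality (π_S'x_S + √(Σ_{i∈T} a_i y_i²) − α_S'(x_S − y_S))² + Σ_{i∈N∖(S∪T)} a_i y_i² ≤ z² at equality, and are affinely independent: (x,y,z) = (0,0,0); (x,y,z) = (Σ_{k≤i} e_(k) + Σ_{j∈T} e_j, Σ_{k≤i} e_(k) + Σ_{j∈T} e_j, √(Σ_{k≤i} a_(k) + Σ_{j∈T} a_j)) for i = 1,...,|S|; and (x,y,z) = (e_i, e_i, √a_i) for each i ∈ N∖S. -/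
/-!
Every point has `y = x` with `x` a 0/1 vector and `z = √(∑ a_i x_i²)`, so it lies in `F`.
Because `y = x` the `α`-term vanishes, and on the point of position `p` the coefficients
`π_{S,(k)}` telescope to `√(a(T) + ∑_{l ≤ p} a_(l)) - √(a(T))`; hence for every point
`π_S'x_S + √(∑_{i∈T} a_i y_i²) = √(∑_{i∈S∪T} a_i y_i²)`, and squaring gives the equality.
The origin is one of the points, so affine independence reduces to linear independence of the
`x`-parts of the others. In a vanishing combination, coordinate `(p)` says that the coefficients
of the positions `≥ p` sum to zero; these suffix sums force every `S`-coefficient to vanish,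
after which a coordinate `i ∉ S` isolates the coefficient of the unit vector `e_i`.
-/

open Finset in
/-- The `n+1` points of the remark after inequality (9): `(0,0,0)`; for each
`i = 1,...,|S|` the point
`(∑_{k≤i} e_(k) + ∑_{j∈T} e_j, ∑_{k≤i} e_(k) + ∑_{j∈T} e_j, √(∑_{k≤i} a_(k) + a(T)))`
(indexed by the element of `S` in position `i` of the permutation `e`); and
`(e_i, e_i, √a_i)` for each `i ∈ N∖S`. -/
noncomputable def tightPointsII (n : ℕ) (a : Fin n → ℝ) (S T : Finset (Fin n))
    (e : Fin S.card ≃ {i // i ∈ S}) :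
    Option (Fin n) → (Fin n → ℝ) × (Fin n → ℝ) × ℝ
  | none => ((fun _ => 0), (fun _ => 0), 0)
  | some i =>
    if h : i ∈ S then
      ((fun m => if hm : m ∈ S then
          (if e.symm ⟨m, hm⟩ ≤ e.symm ⟨i, h⟩ then 1 else 0)
        else (if m ∈ T then 1 else 0)),
       (fun m => if hm : m ∈ S then
          (if e.symm ⟨m, hm⟩ ≤ e.symm ⟨i, h⟩ then 1 else 0)
        else (if m ∈ T then 1 else 0)),
       Real.sqrt ((∑ j ∈ univ.filter (fun j => j ≤ e.symm ⟨i, h⟩), a (e j))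
          + ∑ j ∈ T, a j))
    else
      ((fun m => if m = i then 1 else 0), (fun m => if m = i then 1 else 0),
       Real.sqrt (a i))

open Finset

theorem AffineIndependent.of_linearIndependent_comp_some {k V ι : Type*} [Ring k]
    [AddCommGroup V] [Module k V] {p : Option ι → V} (h0 : p none = 0)
    (h : LinearIndependent k (p ∘ some)) : AffineIndependent k p := by
  rw [affineIndependent_iff_linearIndependent_vsub k p none]
  convert h.comp
    (fun i : {x : Option ι // x ≠ none} => i.1.get (Option.ne_none_iff_isSome.mp i.2))
    (fun ⟨x, hx⟩ ⟨y, hy⟩ hxy => Subtype.ext (Option.get_inj.mp hxy)) using 1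
  ext ⟨x, hx⟩
  simp [h0]

theorem Finset.eq_zero_of_sum_Ici_eq_zero {ι M : Type*} [LinearOrder ι] [Finite ι]
    [LocallyFiniteOrderTop ι] [AddCommMonoid M] {f : ι → M} (h : ∀ p, ∑ q ∈ Ici p, f q = 0)
    (p : ι) : f p = 0 := by
  induction p using WellFoundedGT.induction with
  | _ p ih =>
    have hp := h p
    rwa [Ici_eq_cons_Ioi, sum_cons, sum_eq_zero fun q hq => ih q (mem_Ioi.mp hq),
      add_zero] at hp

theorem Fin.sum_Iic_sub_partialSums {M N : Type*} [AddCommMonoid M] [AddCommGroup N] {m : ℕ}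
    (g : Fin m → M) (φ : M → N) (p : Fin m) :
    ∑ k ∈ Iic p, (φ (∑ l ∈ Iic k, g l) - φ (∑ l ∈ Iio k, g l))
      = φ (∑ l ∈ Iic p, g l) - φ 0 := by
  have := Fin.sum_Iic_sub p fun j => φ (∑ l with l.castSucc < j, g l)
  simp only [Fin.castSucc_lt_succ_iff, Fin.castSucc_lt_castSucc_iff, filter_ge_eq_Iic,
    filter_gt_eq_Iio, Fin.not_lt_zero, filter_false, sum_empty] at this
  exact this

theorem Finset.sum_eq_sum_fin_equiv {ι M : Type*} [AddCommMonoid M] (S : Finset ι)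
    (e : Fin S.card ≃ S) (f : ι → M) : ∑ i ∈ S, f i = ∑ q, f (e q) := by
  rw [← sum_coe_sort]
  exact (e.sum_comp _).symm

section TightPoints

variable {n : ℕ} (a : Fin n → ℝ) (S T : Finset (Fin n)) (e : Fin S.card ≃ {i // i ∈ S})

theorem option_cases_perm {P : Option (Fin n) → Prop} (j : Option (Fin n)) (none : P none)
    (perm : ∀ p, P (some (e p))) (compl : ∀ i ∉ S, P (some i)) : P j := by
  rcases j with _ | i
  · exact none
  · by_cases hi : i ∈ S
    · simpa using perm (e.symm ⟨i, hi⟩)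
    · exact compl i hi

noncomputable def prefixIndicator (p : Fin S.card) : Fin n → ℝ := fun m =>
  if hm : m ∈ S then (if e.symm ⟨m, hm⟩ ≤ p then 1 else 0) else if m ∈ T then 1 else 0

/-- The paper's `π_{S,(k)}`, where `σ_{S(k)} = a(T) + ∑_{l ≤ k} a_(l)`; positions are `0`-based. -/
noncomputable def piCoeff (k : Fin S.card) : ℝ :=
  √((∑ i ∈ T, a i) + ∑ l ∈ Iic k, a (e l))
    - √((∑ i ∈ T, a i) + ∑ l ∈ Iio k, a (e l))

theorem tightPointsII_none : tightPointsII n a S T e none = (0, 0, 0) := rfl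

theorem tightPointsII_some_perm (p : Fin S.card) :
    tightPointsII n a S T e (some (e p)) = (prefixIndicator S T e p, prefixIndicator S T e p,
      √((∑ l ∈ Iic p, a (e l)) + ∑ j ∈ T, a j)) := by
  simp only [tightPointsII, (e p).2, dite_true, Subtype.coe_eta, Equiv.symm_apply_apply,
    filter_ge_eq_Iic]
  rfl

theorem tightPointsII_some_of_notMem {i : Fin n} (hi : i ∉ S) :
    tightPointsII n a S T e (some i) = (Pi.single i 1, Pi.single i 1, √(a i)) := by
  simp only [tightPointsII, hi, dite_false, Prod.mk.injEq]
  simp [funext_iff, Pi.single_apply]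

theorem prefixIndicator_perm (p k : Fin S.card) :
    prefixIndicator S T e p (e k) = if k ≤ p then 1 else 0 := by
  simp [prefixIndicator, (e k).2]

theorem prefixIndicator_of_mem_right (hST : Disjoint S T) (p : Fin S.card) {m : Fin n}
    (hm : m ∈ T) : prefixIndicator S T e p m = 1 := by
  simp [prefixIndicator, disjoint_right.mp hST hm, hm]

theorem prefixIndicator_of_notMem_union (p : Fin S.card) {m : Fin n} (hm : m ∉ S ∪ T) :
    prefixIndicator S T e p m = 0 := by
  simp_all [prefixIndicator]

theorem prefixIndicator_eq_zero_or_one (p : Fin S.card) (m : Fin n) :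
    prefixIndicator S T e p m = 0 ∨ prefixIndicator S T e p m = 1 := by
  unfold prefixIndicator
  split_ifs <;> simp

theorem sum_mul_prefixIndicator_sq_left (p : Fin S.card) :
    ∑ i ∈ S, a i * prefixIndicator S T e p i ^ 2 = ∑ l ∈ Iic p, a (e l) := by
  simp [sum_eq_sum_fin_equiv S e, prefixIndicator_perm, ← sum_filter, filter_ge_eq_Iic]

theorem sum_mul_prefixIndicator_sq_right (hST : Disjoint S T) (p : Fin S.card) :
    ∑ i ∈ T, a i * prefixIndicator S T e p i ^ 2 = ∑ i ∈ T, a i :=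
  sum_congr rfl fun i hi => by simp [prefixIndicator_of_mem_right S T e hST p hi]

theorem sum_mul_prefixIndicator_sq_union (hST : Disjoint S T) (p : Fin S.card) :
    ∑ i ∈ S ∪ T, a i * prefixIndicator S T e p i ^ 2 = ∑ l ∈ Iic p, a (e l) + ∑ i ∈ T, a i := by
  rw [sum_union hST, sum_mul_prefixIndicator_sq_left,
    sum_mul_prefixIndicator_sq_right a S T e hST]

theorem sum_mul_prefixIndicator_sq (hST : Disjoint S T) (p : Fin S.card) :
    ∑ i, a i * prefixIndicator S T e p i ^ 2 = ∑ l ∈ Iic p, a (e l) + ∑ i ∈ T, a i := by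
  rw [← sum_mul_prefixIndicator_sq_union a S T e hST p]
  refine (sum_subset (subset_univ _) fun i _ hi => ?_).symm
  simp [prefixIndicator_of_notMem_union S T e p hi]

theorem sum_Iic_piCoeff (p : Fin S.card) :
    ∑ k ∈ Iic p, piCoeff a S T e k
      = √((∑ i ∈ T, a i) + ∑ l ∈ Iic p, a (e l)) - √(∑ i ∈ T, a i) := by
  simpa only [piCoeff, add_zero] using
    Fin.sum_Iic_sub_partialSums (fun l => a (e l)) (fun x => √((∑ i ∈ T, a i) + x)) p

theorem tightPointsII_snd_fst (j : Option (Fin n)) :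
    (tightPointsII n a S T e j).2.1 = (tightPointsII n a S T e j).1 := by
  induction j using option_cases_perm S e with
  | none => rfl
  | perm p => rw [tightPointsII_some_perm]
  | compl i hi => rw [tightPointsII_some_of_notMem a S T e hi]

theorem tightPointsII_fst_eq_zero_or_one (j : Option (Fin n)) (m : Fin n) :
    (tightPointsII n a S T e j).1 m = 0 ∨ (tightPointsII n a S T e j).1 m = 1 := by
  induction j using option_cases_perm S e with
  | none => exact Or.inl rfl
  | perm p => simpa [tightPointsII_some_perm] using prefixIndicator_eq_zero_or_one S T e p m
  | compl i hi =>
    simp only [tightPointsII_some_of_notMem a S T e hi, Pi.single_apply]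
    split_ifs <;> simp

theorem tightPointsII_snd_snd (hST : Disjoint S T) (j : Option (Fin n)) :
    (tightPointsII n a S T e j).2.2 = √(∑ i, a i * (tightPointsII n a S T e j).1 i ^ 2) := by
  induction j using option_cases_perm S e with
  | none => simp [tightPointsII_none]
  | perm p => rw [tightPointsII_some_perm, sum_mul_prefixIndicator_sq a S T e hST]
  | compl i hi => simp [tightPointsII_some_of_notMem a S T e hi, Pi.single_apply]

theorem sum_piCoeff_mul_fst_add_sqrt (hST : Disjoint S T) (j : Option (Fin n)) :
    ∑ k, piCoeff a S T e k * (tightPointsII n a S T e j).1 (e k)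
        + √(∑ i ∈ T, a i * (tightPointsII n a S T e j).1 i ^ 2)
      = √(∑ i ∈ S ∪ T, a i * (tightPointsII n a S T e j).1 i ^ 2) := by
  induction j using option_cases_perm S e with
  | none => simp [tightPointsII_none]
  | perm p =>
    simp only [tightPointsII_some_perm, prefixIndicator_perm, mul_ite, mul_one, mul_zero,
      ← sum_filter, filter_ge_eq_Iic, sum_Iic_piCoeff,
      sum_mul_prefixIndicator_sq_right a S T e hST, sum_mul_prefixIndicator_sq_union a S T e hST]
    rw [sub_add_cancel, add_comm]
  | compl i hi =>
    have hne : ∀ k, (e k : Fin n) ≠ i := fun k hk => hi (hk ▸ (e k).2)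
    simp [tightPointsII_some_of_notMem a S T e hi, Pi.single_apply, hne, hi]

theorem linearIndependent_tightPointsII_fst :
    LinearIndependent ℝ fun i => (tightPointsII n a S T e (some i)).1 := by
  rw [Fintype.linearIndependent_iff]
  intro w hw
  have hcoord : ∀ m, ∑ i ∈ S, w i * (tightPointsII n a S T e (some i)).1 m
      + (if m ∈ S then 0 else w m) = 0 := fun m => by
    have hcompl : ∑ i ∈ Sᶜ, w i * (tightPointsII n a S T e (some i)).1 m
        = if m ∈ S then 0 else w m := by
      rw [sum_congr rfl fun i hi => by
        rw [tightPointsII_some_of_notMem a S T e (mem_compl.mp hi)]]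
      simp [Pi.single_apply, ite_not]
    rw [← hcompl, sum_add_sum_compl]
    simpa using congrFun hw m
  have hS : ∀ q, w (e q) = 0 := eq_zero_of_sum_Ici_eq_zero fun p => by
    simpa [(e p).2, sum_eq_sum_fin_equiv S e, tightPointsII_some_perm, prefixIndicator_perm,
      ← sum_filter, filter_le_eq_Ici] using hcoord (e p)
  intro i
  by_cases hi : i ∈ S
  · simpa using hS (e.symm ⟨i, hi⟩)
  · simpa [sum_eq_sum_fin_equiv S e, hS, hi] using hcoord i

end TightPoints

/-- **Tightness of the lifted nonlinear polymatroid inequality II.** For disjoint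
`S ⊆ N` and `T ⊆ N∖S` and a permutation `e` of `S`, the `n+1` points
`tightPointsII` belong to
`F = {(x,y,z) ∈ {0,1}^N × ℝ₊^N × ℝ₊ : ∑ a i y i² ≤ z², 0 ≤ y ≤ x}`, satisfy
`(π_S'x_S + √(∑_{i∈T} a i y i²) − α_S'(x_S − y_S))² + ∑_{i∈N∖(S∪T)} a i y i² = z²`,
and are affinely independent. -/
theorem lifted_nonlinear_polymatroid_II_tight
    (n : ℕ) (a : Fin n → ℝ) (ha : ∀ i, 0 < a i)
    (S T : Finset (Fin n)) (hST : Disjoint S T)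
    (e : Fin S.card ≃ {i // i ∈ S}) :
    (∀ j : Option (Fin n),
        (∀ i, (tightPointsII n a S T e j).1 i = 0 ∨
              (tightPointsII n a S T e j).1 i = 1) ∧
        (∀ i, 0 ≤ (tightPointsII n a S T e j).2.1 i ∧
              (tightPointsII n a S T e j).2.1 i ≤ (tightPointsII n a S T e j).1 i) ∧
        0 ≤ (tightPointsII n a S T e j).2.2 ∧
        ∑ i, a i * (tightPointsII n a S T e j).2.1 i ^ 2
          ≤ (tightPointsII n a S T e j).2.2 ^ 2) ∧
    (∀ j : Option (Fin n),
        (∑ k, (Real.sqrt ((∑ i ∈ T, a i)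
                  + ∑ l ∈ Finset.univ.filter (fun l => l ≤ k), a (e l))
              - Real.sqrt ((∑ i ∈ T, a i)
                  + ∑ l ∈ Finset.univ.filter (fun l => l < k), a (e l)))
                * (tightPointsII n a S T e j).1 (e k)
          + Real.sqrt (∑ i ∈ T, a i * (tightPointsII n a S T e j).2.1 i ^ 2)
          - ∑ k, (a (e k)
                / Real.sqrt ((∑ i ∈ T, a i)
                    + ∑ l ∈ Finset.univ.filter (fun l => l ≤ k), a (e l)))
                * ((tightPointsII n a S T e j).1 (e k)
                    - (tightPointsII n a S T e j).2.1 (e k))) ^ 2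
          + ∑ i ∈ Finset.univ \ (S ∪ T),
              a i * (tightPointsII n a S T e j).2.1 i ^ 2
          = (tightPointsII n a S T e j).2.2 ^ 2) ∧
    AffineIndependent ℝ (tightPointsII n a S T e) := by
  have hsnd := tightPointsII_snd_fst a S T e
  have hsq_nonneg : ∀ (s : Finset (Fin n)) (x : Fin n → ℝ), 0 ≤ ∑ i ∈ s, a i * x i ^ 2 :=
    fun s x => sum_nonneg fun i _ => mul_nonneg (ha i).le (sq_nonneg _)
  refine ⟨fun j => ⟨tightPointsII_fst_eq_zero_or_one a S T e j, fun i => ?_, ?_, ?_⟩,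
    fun j => ?_, ?_⟩
  · rw [hsnd]
    exact ⟨(tightPointsII_fst_eq_zero_or_one a S T e j i).elim (·.ge) (· ▸ zero_le_one),
      le_rfl⟩
  · rw [tightPointsII_snd_snd a S T e hST]
    exact Real.sqrt_nonneg _
  · rw [hsnd, tightPointsII_snd_snd a S T e hST, Real.sq_sqrt (hsq_nonneg _ _)]
  · simp only [hsnd, sub_self, mul_zero, sum_const_zero, sub_zero, filter_ge_eq_Iic,
      filter_gt_eq_Iio, ← piCoeff.eq_def, sum_piCoeff_mul_fst_add_sqrt a S T e hST,
      Real.sq_sqrt (hsq_nonneg _ _), tightPointsII_snd_snd a S T e hST]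
    rw [add_comm, sum_sdiff (subset_univ _)]
  · exact AffineIndependent.of_linearIndependent_comp_some rfl
      ((linearIndependent_tightPointsII_fst a S T e).of_comp (LinearMap.fst ℝ _ _))
end
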